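/- For every ideal I of R_S, the Newton polyhedron of I equals the Newton polyhedron of its integral closure: Γ₊(I) = Γ₊(Ī). -/

import Mathlib

open scoped BigOperators

noncomputable section

namespace ToricNewton

/-- The submonoid `S ⊆ ℤⁿ` generated by `b₁, …, b_r`. -/
def Sgroup {n r : ℕ} (b : Fin r → Fin n → ℤ) : AddSubmonoid (Fin n → ℤ) :=
  AddSubmonoid.closure (Set.range b)

/-- View an exponent `d ∈ ℕⁿ` as a point of `ℤⁿ`. -/
def expToZ {n : ℕ} (d : Fin n →₀ ℕ) : Fin n → ℤ := fun i => (d i : ℤ)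

lemma expToZ_zero {n : ℕ} : expToZ (0 : Fin n →₀ ℕ) = 0 := by
  funext i; simp [expToZ]

lemma expToZ_add {n : ℕ} (d e : Fin n →₀ ℕ) : expToZ (d + e) = expToZ d + expToZ e := by
  funext i; simp [expToZ]

/-- `R_S`: the subalgebra of `ℂ[[x₁,…,xₙ]]` of series with support in `S`;
this is the algebraic model of the local ring `𝒪_{X(S)}` at the origin. -/
def RS {n r : ℕ} (b : Fin r → Fin n → ℤ) : Subalgebra ℂ (MvPowerSeries (Fin n) ℂ) where
  carrier := { f | ∀ d : Fin n →₀ ℕ, MvPowerSeries.coeff d f ≠ 0 → expToZ d ∈ Sgroup b }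
  add_mem' := by
    intro f g hf hg d hd
    rw [Set.mem_setOf_eq] at hf hg
    rw [map_add] at hd
    by_cases h1 : MvPowerSeries.coeff d f ≠ 0
    · exact hf d h1
    · push_neg at h1
      exact hg d (by simpa [h1] using hd)
  zero_mem' := by intro d hd; simp at hd
  one_mem' := by
    intro d hd
    rw [MvPowerSeries.coeff_one] at hd
    split_ifs at hd with h
    · subst h; simpa [expToZ_zero] using (Sgroup b).zero_mem
    · exact absurd rfl hd
  mul_mem' := by
    intro f g hf hg d hd
    rw [Set.mem_setOf_eq] at hf hg
    rw [MvPowerSeries.coeff_mul] at hd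
    obtain ⟨p, hp, hne⟩ := Finset.exists_ne_zero_of_sum_ne_zero hd
    rw [Finset.HasAntidiagonal.mem_antidiagonal] at hp
    have h1 : MvPowerSeries.coeff p.1 f ≠ 0 := left_ne_zero_of_mul hne
    have h2 : MvPowerSeries.coeff p.2 g ≠ 0 := right_ne_zero_of_mul hne
    have := (Sgroup b).add_mem (hf _ h1) (hg _ h2)
    rwa [← expToZ_add, hp] at this
  algebraMap_mem' := by
    intro c d hd
    rw [MvPowerSeries.algebraMap_apply, MvPowerSeries.coeff_C] at hd
    split_ifs at hd with h
    · subst h; simpa [expToZ_zero] using (Sgroup b).zero_mem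
    · exact absurd rfl hd

/-- The exponent in `ℕⁿ` associated to `s ∈ ℤⁿ` (with nonnegative entries). -/
def natExp {n : ℕ} (s : Fin n → ℤ) : Fin n →₀ ℕ :=
  Finsupp.equivFunOnFinite.symm fun i => (s i).toNat

/-- The monomial power series `x^s` with coefficient `1`. -/
def monomialZ {n : ℕ} (s : Fin n → ℤ) : MvPowerSeries (Fin n) ℂ :=
  MvPowerSeries.monomial (natExp s) 1

/-- View a lattice point as a point of `ℝⁿ`. -/
def toReal {n : ℕ} (k : Fin n → ℤ) : Fin n → ℝ := fun i => (k i : ℝ)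

/-- The standard pairing on `ℝⁿ`. -/
def dotR {n : ℕ} (x v : Fin n → ℝ) : ℝ := ∑ i, x i * v i

/-- The cone of `S`, i.e. nonnegative real combinations of `b₁, …, b_r`. -/
def coneS {n r : ℕ} (b : Fin r → Fin n → ℤ) : Set (Fin n → ℝ) :=
  { x | ∃ lam : Fin r → ℝ, (∀ i, 0 ≤ lam i) ∧ x = ∑ i, lam i • toReal (b i) }

/-- The dual cone of `cone(S)`. -/
def dualConeS {n r : ℕ} (b : Fin r → Fin n → ℤ) : Set (Fin n → ℝ) :=
  { u | ∀ v ∈ coneS b, 0 ≤ dotR u v }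

/-- The Newton polyhedron `Γ₊(A)` of `A ⊆ S`: the convex hull of
`{k + v : k ∈ A, v ∈ cone(S)}`. -/
def NewtonPoly {n r : ℕ} (b : Fin r → Fin n → ℤ) (A : Set (Fin n → ℤ)) :
    Set (Fin n → ℝ) :=
  convexHull ℝ { x | ∃ k ∈ A, ∃ v ∈ coneS b, x = toReal k + v }

/-- `ℓ(v, P) = inf {⟨k, v⟩ : k ∈ P}`. -/
def ellP {n : ℕ} (P : Set (Fin n → ℝ)) (v : Fin n → ℝ) : ℝ :=
  sInf ((fun k => dotR k v) '' P)

/-- `Δ(v, P) = {k ∈ P : ⟨k, v⟩ = ℓ(v, P)}`. -/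
def faceP {n : ℕ} (P : Set (Fin n → ℝ)) (v : Fin n → ℝ) : Set (Fin n → ℝ) :=
  { k ∈ P | dotR k v = ellP P v }

/-- The support of a power series, as a subset of `ℤⁿ`. -/
def suppZ {n : ℕ} (g : MvPowerSeries (Fin n) ℂ) : Set (Fin n → ℤ) :=
  { s | ∃ d : Fin n →₀ ℕ, MvPowerSeries.coeff d g ≠ 0 ∧ s = expToZ d }

/-- The Newton polyhedron `Γ₊(I)` of an ideal `I ⊆ R_S`. -/
def NewtonIdeal {n r : ℕ} (b : Fin r → Fin n → ℤ) (I : Ideal ↥(RS b)) :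
    Set (Fin n → ℝ) :=
  NewtonPoly b (⋃ g ∈ (I : Set ↥(RS b)), suppZ (g : MvPowerSeries (Fin n) ℂ))

/-- `h` is integral over the ideal `I`:
`h^m + a₁ h^(m-1) + ⋯ + a_m = 0` with `aᵢ ∈ Iⁱ`. -/
def IsIntegralOverIdeal {R : Type*} [CommRing R] (I : Ideal R) (h : R) : Prop :=
  ∃ m : ℕ, 0 < m ∧ ∃ a : Fin m → R, (∀ i : Fin m, a i ∈ I ^ ((i : ℕ) + 1)) ∧
    h ^ m + ∑ i : Fin m, a i * h ^ (m - 1 - (i : ℕ)) = 0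

/-- `I°`: the ideal generated by the monomials `x^k` with `k ∈ S ∩ Γ₊(I)`. -/
def Icirc {n r : ℕ} (b : Fin r → Fin n → ℤ) (I : Ideal ↥(RS b)) : Ideal ↥(RS b) :=
  Ideal.span { m : ↥(RS b) | ∃ s : Fin n → ℤ, s ∈ Sgroup b ∧
    toReal s ∈ NewtonIdeal b I ∧ (m : MvPowerSeries (Fin n) ℂ) = monomialZ s }

/-- `C(Ī)`: the convex hull of the exponents of the monomials in the integral closure. -/
def CIbar {n r : ℕ} (b : Fin r → Fin n → ℤ) (I : Ideal ↥(RS b)) : Set (Fin n → ℝ) :=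
  convexHull ℝ (toReal '' { s : Fin n → ℤ | s ∈ Sgroup b ∧
    ∃ m : ↥(RS b), (m : MvPowerSeries (Fin n) ℂ) = monomialZ s ∧ IsIntegralOverIdeal I m })

/-- The coefficient of `g` at a lattice exponent `v`. -/
def coeffZ {n : ℕ} (g : MvPowerSeries (Fin n) ℂ) (v : Fin n → ℤ) : ℂ :=
  MvPowerSeries.coeff (natExp v) g

/-- `L(g_Δ)` evaluated at `z`: the polynomial `∑_{v ∈ supp(g) ∩ Δ} a_v z^v`. -/
def Lface {n : ℕ} (g : MvPowerSeries (Fin n) ℂ) (Δ : Set (Fin n → ℝ))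
    (z : Fin n → ℂ) : ℂ :=
  ∑ᶠ v ∈ { v : Fin n → ℤ | v ∈ suppZ g ∧ toReal v ∈ Δ },
    coeffZ g v * ∏ i, z i ^ (v i)

/-- `Δ` is a (nonempty) compact face of the polyhedron `P`. -/
def IsCompactFace {n r : ℕ} (b : Fin r → Fin n → ℤ) (P Δ : Set (Fin n → ℝ)) : Prop :=
  (∃ v ∈ dualConeS b, Δ = faceP P v) ∧ Δ.Nonempty ∧ IsCompact Δ

/-- A finite generating family of `I` is non-degenerate if on every compact face `Δ`
of `Γ₊(I)` the polynomials `L((gⱼ)_Δ)` have no common zero in the torus `(ℂ*)ⁿ`. -/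
def NondegenFamily {n r : ℕ} (b : Fin r → Fin n → ℤ) {l : ℕ}
    (g : Fin l → ↥(RS b)) (I : Ideal ↥(RS b)) : Prop :=
  ∀ Δ : Set (Fin n → ℝ), IsCompactFace b (NewtonIdeal b I) Δ →
    ¬ ∃ z : Fin n → ℂ, (∀ i, z i ≠ 0) ∧
      ∀ j, Lface (g j : MvPowerSeries (Fin n) ℂ) Δ z = 0

/-- An ideal is non-degenerate if it admits a non-degenerate finite generating family. -/
def Nondegenerate {n r : ℕ} (b : Fin r → Fin n → ℤ) (I : Ideal ↥(RS b)) : Prop :=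
  ∃ l : ℕ, ∃ g : Fin l → ↥(RS b), Ideal.span (Set.range g) = I ∧ NondegenFamily b g I

/-- The toric ideal `I_S ⊆ ℂ[x₁,…,x_r]`, generated by the binomials
`x^{α₊} - x^{α₋}` over the relations `α` of `b₁, …, b_r`. -/
def toricIdeal {n r : ℕ} (b : Fin r → Fin n → ℤ) : Ideal (MvPolynomial (Fin r) ℂ) :=
  Ideal.span { p | ∃ α : Fin r → ℤ, (∑ i, α i • b i) = 0 ∧
    p = (∏ i, MvPolynomial.X i ^ (α i).toNat) - ∏ i, MvPolynomial.X i ^ (-(α i)).toNat }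

/-- The affine toric variety `X(S) = V(I_S) ⊆ ℂ^r`. -/
def XS {n r : ℕ} (b : Fin r → Fin n → ℤ) : Set (Fin r → ℂ) :=
  { x | ∀ p ∈ toricIdeal b, MvPolynomial.eval x p = 0 }

end ToricNewton

/-!
`Γ₊(I) ⊆ Γ₊(Ī)` because `I ⊆ Ī`. Conversely, by Dickson's lemma `Γ₊(I)` is the convex hull of
finitely many points plus `cone(S)`, which is closed by Carathéodory's theorem for cones; so a
support point `k` of an `h` integral over `I` lying outside `Γ₊(I)` is strictly separated from it
by a linear form `f ≥ 0` on `cone(S)`: `f(k) < u < f` on `Γ₊(I)`. Weighting exponents by `f`,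
elements of `Iⁱ` have weights `≥ i u`, while `h` attains a minimal weight `τ < u`. The weight-`τ`
part of `h` is a nonzero series, so `hᵐ` has a term of weight `≤ m τ`, whereas every other term
of `hᵐ + a₁ hᵐ⁻¹ + ⋯ + a_m = 0` only has weights `> m τ`.
-/

open Set
open scoped Pointwise

theorem exists_finite_subset_forall_exists_le {α : Type*} [PartialOrder α]
    [WellQuasiOrderedLE α] (C : Set α) :
    ∃ F ⊆ C, F.Finite ∧ ∀ c ∈ C, ∃ f ∈ F, f ≤ c := by
  refine ⟨{x | Minimal (· ∈ C) x}, fun _ hx => hx.1,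
    WellQuasiOrderedLE.finite_of_isAntichain (setOfPred_minimal_antichain _), fun c hc => ?_⟩
  obtain ⟨f, hfc, hf⟩ := (isPWO_of_wellQuasiOrderedLE C).exists_le_minimal hc
  exact ⟨f, hf, hfc⟩

theorem AddSubmonoid.exists_finite_subset_subset_add_closure_range {M ι : Type*}
    [AddCommMonoid M] [Fintype ι] (v : ι → M) {A : Set M}
    (hA : A ⊆ AddSubmonoid.closure (Set.range v)) :
    ∃ F ⊆ A, F.Finite ∧ A ⊆ F + (AddSubmonoid.closure (Set.range v) : Set M) := by
  let σ : (ι → ℕ) → M := fun c => ∑ i, c i • v i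
  obtain ⟨F₀, hF₀, hF₀fin, hF₀cover⟩ := exists_finite_subset_forall_exists_le {c | σ c ∈ A}
  refine ⟨σ '' F₀, Set.image_subset_iff.mpr hF₀, hF₀fin.image σ, fun a ha => ?_⟩
  obtain ⟨c, rfl⟩ := AddSubmonoid.mem_closure_range_iff_of_fintype.mp (hA ha)
  obtain ⟨f, hf, hfc⟩ := hF₀cover c ha
  refine ⟨σ f, Set.mem_image_of_mem σ hf, σ (c - f),
    AddSubmonoid.mem_closure_range_iff_of_fintype.mpr ⟨c - f, rfl⟩, ?_⟩
  simp only [σ, ← Finset.sum_add_distrib, ← add_smul]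
  exact Finset.sum_congr rfl fun i _ => by rw [Pi.sub_apply, add_tsub_cancel_of_le (hfc i)]

section ConicCaratheodory

variable {ι E : Type*} [Fintype ι] [AddCommGroup E] [Module ℝ E] {v : ι → E}

theorem exists_sum_smul_eq_zero_of_not_linearIndepOn {s : Set ι}
    (h : ¬ LinearIndepOn ℝ v s) :
    ∃ g : ι → ℝ, ∑ i, g i • v i = 0 ∧ Function.support g ⊆ s ∧ ∃ i, 0 < g i := by
  rw [linearIndepOn_iff] at h
  push Not at h
  obtain ⟨l, hls, hl0, hl⟩ := h
  obtain ⟨i, hi⟩ := Finsupp.ne_iff.mp hl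
  rw [Finsupp.linearCombination_apply, Finsupp.sum_fintype _ _ (by simp)] at hl0
  have hsupp : Function.support l ⊆ s := fun j hj => hls (Finsupp.mem_support_iff.mpr hj)
  rcases hi.lt_or_gt with hneg | hpos
  · exact ⟨-l, by simp [neg_smul, hl0], by simpa using hsupp, i, by simpa using hneg⟩
  · exact ⟨l, hl0, hsupp, i, hpos⟩

theorem exists_nonneg_combination_support_ssubset {c : ι → ℝ} (hc : ∀ i, 0 ≤ c i)
    (hdep : ¬ LinearIndepOn ℝ v (Function.support c)) :
    ∃ c' : ι → ℝ, (∀ i, 0 ≤ c' i) ∧ ∑ i, c' i • v i = ∑ i, c i • v i ∧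
      Function.support c' ⊂ Function.support c := by
  classical
  obtain ⟨g, hg0, hgc, hgpos⟩ := exists_sum_smul_eq_zero_of_not_linearIndepOn hdep
  -- `c' = c - t • g` with `t` the largest step keeping `c'` nonnegative; it vanishes at `j`.
  obtain ⟨j, hj, hjmin⟩ := Finset.exists_min_image (Finset.univ.filter fun i => 0 < g i)
    (fun i => c i / g i) (by simpa [Finset.filter_nonempty_iff] using hgpos)
  rw [Finset.mem_filter] at hj
  set t := c j / g j
  have hcj : c j - t * g j = 0 := by simp [t, hj.2.ne']
  refine ⟨fun i => c i - t * g i, fun i => ?_, ?_, ?_⟩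
  · rcases lt_or_ge 0 (g i) with hgi | hgi
    · have := hjmin i (by simpa using hgi)
      rw [div_le_div_iff₀ hj.2 hgi] at this
      simp only [sub_nonneg]
      calc t * g i = c j * g i / g j := by ring
        _ ≤ c i := by rw [div_le_iff₀ hj.2]; linarith
    · nlinarith [hc i, div_nonneg (hc j) hj.2.le]
  · simp only [sub_smul, Finset.sum_sub_distrib, mul_smul, ← Finset.smul_sum, hg0, smul_zero,
      sub_zero]
  · refine (Set.ssubset_iff_of_subset fun i hi => ?_).mpr
      ⟨j, hgc (Function.mem_support.mpr hj.2.ne'), by simpa using hcj⟩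
    by_contra hci
    have : g i = 0 := by_contra fun h => hci (hgc h)
    simp_all

theorem exists_nonneg_combination_linearIndepOn {c : ι → ℝ} (hc : ∀ i, 0 ≤ c i) :
    ∃ c' : ι → ℝ, (∀ i, 0 ≤ c' i) ∧ ∑ i, c' i • v i = ∑ i, c i • v i ∧
      LinearIndepOn ℝ v (Function.support c') := by
  induction hN : (Function.support c).ncard using Nat.strong_induction_on generalizing c with
  | _ N ih =>
    by_cases hind : LinearIndepOn ℝ v (Function.support c)
    · exact ⟨c, hc, rfl, hind⟩
    obtain ⟨c₁, hc₁, hsum₁, hsub⟩ := exists_nonneg_combination_support_ssubset hc hind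
    obtain ⟨c', hc', hsum', hind'⟩ :=
      ih _ (hN ▸ Set.ncard_lt_ncard hsub (Set.toFinite _)) hc₁ rfl
    exact ⟨c', hc', hsum'.trans hsum₁, hind'⟩

variable [TopologicalSpace E] [IsTopologicalAddGroup E] [ContinuousSMul ℝ E] [T2Space E]

theorem isClosed_nonneg_combinations_of_linearIndependent {κ : Type*} [Fintype κ] {w : κ → E}
    (hw : LinearIndependent ℝ w) :
    IsClosed {x | ∃ c : κ → ℝ, (∀ i, 0 ≤ c i) ∧ x = ∑ i, c i • w i} := by
  have himage : {x | ∃ c : κ → ℝ, (∀ i, 0 ≤ c i) ∧ x = ∑ i, c i • w i} =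
      Fintype.linearCombination ℝ w '' {c | ∀ i, 0 ≤ c i} := by
    ext x
    simp [Fintype.linearCombination_apply, eq_comm]
  rw [himage]
  refine (LinearMap.isClosedEmbedding_of_injective ?_).isClosedMap _ ?_
  · exact LinearMap.ker_eq_bot.mpr hw.fintypeLinearCombination_injective
  · simpa only [Set.ofPred_forall] using isClosed_iInter fun i => isClosed_le continuous_const
      (continuous_apply i)

theorem isClosed_nonneg_combinations (v : ι → E) :
    IsClosed {x | ∃ c : ι → ℝ, (∀ i, 0 ≤ c i) ∧ x = ∑ i, c i • v i} := by
  classical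
  have hunion : {x | ∃ c : ι → ℝ, (∀ i, 0 ≤ c i) ∧ x = ∑ i, c i • v i} =
      ⋃ s ∈ {s : Finset ι | LinearIndepOn ℝ v (s : Set ι)},
        {x | ∃ c : s → ℝ, (∀ i, 0 ≤ c i) ∧ x = ∑ i, c i • v i} := by
    ext x
    simp only [Set.mem_ofPred_eq, Set.mem_iUnion, exists_prop]
    constructor
    · rintro ⟨c, hc, rfl⟩
      obtain ⟨c', hc', hsum, hind⟩ := exists_nonneg_combination_linearIndepOn (v := v) hc
      refine ⟨(Function.support c').toFinset, by simpa using hind, fun i => c' i,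
        fun i => hc' i, ?_⟩
      rw [← hsum, Finset.sum_coe_sort _ (fun i => c' i • v i)]
      exact (Finset.sum_subset (Finset.subset_univ _) (by simp +contextual)).symm
    · rintro ⟨s, -, c, hc, rfl⟩
      refine ⟨fun i => if h : i ∈ s then c ⟨i, h⟩ else 0, fun i => ?_, ?_⟩
      · dsimp only; split_ifs <;> simp [hc]
      · rw [← Finset.sum_subset (Finset.subset_univ s) (by simp +contextual),
          ← Finset.sum_coe_sort s]
        simp
  rw [hunion]
  exact (Set.toFinite _).isClosed_biUnion fun s hs =>
    isClosed_nonneg_combinations_of_linearIndependent hs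

end ConicCaratheodory

namespace MvPowerSeries

section Weights

variable {σ R : Type*} [CommRing R] (w : (σ →₀ ℕ) →+ ℝ)

def weightsIn (T : Set ℝ) : AddSubgroup (MvPowerSeries σ R) where
  carrier := {p | ∀ d, coeff d p ≠ 0 → w d ∈ T}
  add_mem' {p q} hp hq d hd := by
    by_cases h : coeff d p = 0
    · exact hq d (by simpa [h] using hd)
    · exact hp d h
  zero_mem' d hd := by simp at hd
  neg_mem' {p} hp d hd := hp d (by simpa using hd)

variable {w}

theorem weightsIn_mono {T U : Set ℝ} (hTU : T ⊆ U) : weightsIn (R := R) w T ≤ weightsIn w U :=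
  fun _ hp d hd => hTU (hp d hd)

theorem coeff_eq_zero_of_mem_weightsIn {T : Set ℝ} {p : MvPowerSeries σ R}
    (hp : p ∈ weightsIn w T) {d : σ →₀ ℕ} (hd : w d ∉ T) : coeff d p = 0 :=
  by_contra fun h => hd (hp d h)

theorem one_mem_weightsIn {T : Set ℝ} (hT : (0 : ℝ) ∈ T) :
    (1 : MvPowerSeries σ R) ∈ weightsIn w T := by
  classical
  intro d hd
  rw [coeff_one] at hd
  split_ifs at hd with h
  · simpa [h] using hT
  · exact absurd rfl hd

theorem mul_mem_weightsIn {T U : Set ℝ} {p q : MvPowerSeries σ R} (hp : p ∈ weightsIn w T)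
    (hq : q ∈ weightsIn w U) : p * q ∈ weightsIn w (T + U) := by
  classical
  intro d hd
  rw [coeff_mul] at hd
  obtain ⟨e, he, hne⟩ := Finset.exists_ne_zero_of_sum_ne_zero hd
  rw [Finset.HasAntidiagonal.mem_antidiagonal] at he
  rw [← he, map_add]
  exact Set.add_mem_add (hp _ (left_ne_zero_of_mul hne)) (hq _ (right_ne_zero_of_mul hne))

theorem pow_mem_weightsIn_Ici {α : ℝ} {p : MvPowerSeries σ R} (hp : p ∈ weightsIn w (Ici α))
    (m : ℕ) : p ^ m ∈ weightsIn w (Ici (m * α)) := by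
  induction m with
  | zero => simpa using one_mem_weightsIn (w := w) (R := R) Set.self_mem_Ici
  | succ m ih =>
    refine weightsIn_mono ?_ (pow_succ p m ▸ mul_mem_weightsIn ih hp)
    exact (Set.Ici_add_Ici_subset _ _).trans_eq (congrArg Ici (by push_cast; ring))

theorem pow_mem_weightsIn_Iic {α : ℝ} {p : MvPowerSeries σ R} (hp : p ∈ weightsIn w (Iic α))
    (m : ℕ) : p ^ m ∈ weightsIn w (Iic (m * α)) := by
  induction m with
  | zero => simpa using one_mem_weightsIn (w := w) (R := R) Set.self_mem_Iic
  | succ m ih =>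
    refine weightsIn_mono ?_ (pow_succ p m ▸ mul_mem_weightsIn ih hp)
    exact (Set.Iic_add_Iic_subset _ _).trans_eq (congrArg Iic (by push_cast; ring))

theorem pow_sub_pow_mem_weightsIn_Ioi {τ : ℝ} {p q : MvPowerSeries σ R}
    (hp : p ∈ weightsIn w (Ici τ)) (hq : q ∈ weightsIn w (Ici τ))
    (hpq : p - q ∈ weightsIn w (Ioi τ)) (m : ℕ) :
    p ^ m - q ^ m ∈ weightsIn w (Ioi (m * τ)) := by
  induction m with
  | zero => simp [zero_mem]
  | succ m ih =>
    have hsplit : p ^ (m + 1) - q ^ (m + 1) = p ^ m * (p - q) + (p ^ m - q ^ m) * q := by ring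
    have hτ : (↑(m + 1) : ℝ) * τ = m * τ + τ := by push_cast; ring
    rw [hsplit, hτ]
    exact add_mem
      (weightsIn_mono (Set.Ici_add_Ioi_subset _ _)
        (mul_mem_weightsIn (pow_mem_weightsIn_Ici hp m) hpq))
      (weightsIn_mono (Set.Ioi_add_Ici_subset _ _) (mul_mem_weightsIn ih hq))

theorem exists_coeff_pow_ne_zero_weight_le [NoZeroDivisors R] {τ : ℝ} {p : MvPowerSeries σ R}
    (hp : p ∈ weightsIn w (Ici τ)) {d₀ : σ →₀ ℕ} (hd₀ : coeff d₀ p ≠ 0) (hτ : w d₀ = τ)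
    (m : ℕ) : ∃ d, coeff d (p ^ m) ≠ 0 ∧ w d ≤ m * τ := by
  classical
  -- Up to weights `> m * τ`, `p ^ m` is the `m`-th power of the weight-`τ` part `p₀ ≠ 0` of `p`.
  let p₀ : MvPowerSeries σ R := fun d => if w d = τ then coeff d p else 0
  have hcoeff (d : σ →₀ ℕ) : coeff d p₀ = if w d = τ then coeff d p else 0 := rfl
  have hp₀ : p₀ ∈ weightsIn w {τ} := fun d hd => by
    by_contra h
    simp [hcoeff, show w d ≠ τ from h] at hd
  have hpp₀ : p - p₀ ∈ weightsIn w (Ioi τ) := fun d hd => by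
    rw [map_sub, hcoeff] at hd
    split_ifs at hd with h
    · simp at hd
    · exact (hp d (by simpa using hd)).lt_of_ne' h
  have hp₀ne : p₀ ≠ 0 := fun h => hd₀ (by simpa [hcoeff, hτ] using congrArg (coeff d₀) h)
  obtain ⟨d, hd⟩ := (ne_zero_iff_exists_coeff_ne_zero _).mp (pow_ne_zero m hp₀ne)
  have hle : w d ≤ m * τ :=
    pow_mem_weightsIn_Iic (weightsIn_mono (Set.singleton_subset_iff.mpr Set.self_mem_Iic) hp₀)
      m d hd
  refine ⟨d, ?_, hle⟩
  have hdiff := coeff_eq_zero_of_mem_weightsIn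
    (pow_sub_pow_mem_weightsIn_Ioi hp
      (weightsIn_mono (Set.singleton_subset_iff.mpr Set.self_mem_Ici) hp₀) hpp₀ m)
    (not_lt.mpr hle)
  rw [map_sub, sub_eq_zero] at hdiff
  rwa [hdiff]

theorem map_mem_weightsIn_of_mem_pow {A F : Type*} [CommRing A]
    [FunLike F A (MvPowerSeries σ R)] [RingHomClass F A (MvPowerSeries σ R)] (φ : F)
    {I : Ideal A} {u : ℝ} (hI : ∀ g ∈ I, φ g ∈ weightsIn w (Ici u)) (j : ℕ) {a : A}
    (ha : a ∈ I ^ (j + 1)) : φ a ∈ weightsIn w (Ici ((j + 1) * u)) := by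
  induction j generalizing a with
  | zero => simpa using hI a (by simpa using ha)
  | succ j ih =>
    rw [pow_succ] at ha
    refine Submodule.mul_induction_on ha (fun x hx y hy => ?_) (fun x y hx hy => ?_)
    · rw [map_mul]
      refine weightsIn_mono ?_ (mul_mem_weightsIn (ih hx) (hI y hy))
      exact (Set.Ici_add_Ici_subset _ _).trans_eq (congrArg Ici (by push_cast; ring))
    · rw [map_add]
      exact add_mem hx hy

end Weights

end MvPowerSeries

namespace ToricNewton

open MvPowerSeries

section Toric

variable {n r : ℕ} {b : Fin r → Fin n → ℤ}

lemma toReal_zero : toReal (0 : Fin n → ℤ) = 0 := by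
  ext i; simp [toReal]

lemma toReal_add (x y : Fin n → ℤ) : toReal (x + y) = toReal x + toReal y := by
  ext i; simp [toReal]

lemma suppZ_subset_Sgroup (g : RS b) : suppZ (g : MvPowerSeries (Fin n) ℂ) ⊆ Sgroup b := by
  rintro _ ⟨d, hd, rfl⟩
  exact g.2 d hd

lemma zero_mem_coneS : (0 : Fin n → ℝ) ∈ coneS b :=
  ⟨0, fun _ => le_rfl, by simp⟩

lemma add_mem_coneS {x y : Fin n → ℝ} (hx : x ∈ coneS b) (hy : y ∈ coneS b) :
    x + y ∈ coneS b := by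
  obtain ⟨c, hc, rfl⟩ := hx
  obtain ⟨c', hc', rfl⟩ := hy
  exact ⟨c + c', fun i => add_nonneg (hc i) (hc' i), by simp [add_smul, Finset.sum_add_distrib]⟩

lemma smul_mem_coneS {t : ℝ} (ht : 0 ≤ t) {x : Fin n → ℝ} (hx : x ∈ coneS b) :
    t • x ∈ coneS b := by
  obtain ⟨c, hc, rfl⟩ := hx
  exact ⟨t • c, fun i => mul_nonneg ht (hc i), by simp [Finset.smul_sum, smul_smul]⟩

lemma convex_coneS : Convex ℝ (coneS b) := fun _ hx _ hy _ _ ha hc _ =>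
  add_mem_coneS (smul_mem_coneS ha hx) (smul_mem_coneS hc hy)

lemma isClosed_coneS : IsClosed (coneS b) :=
  isClosed_nonneg_combinations fun i => toReal (b i)

lemma toReal_mem_coneS {s : Fin n → ℤ} (hs : s ∈ Sgroup b) : toReal s ∈ coneS b := by
  obtain ⟨c, rfl⟩ := AddSubmonoid.mem_closure_range_iff_of_fintype.mp hs
  exact ⟨fun i => c i, fun i => Nat.cast_nonneg _, by ext j; simp [toReal, Finset.sum_apply]⟩

lemma newtonPoly_eq_convexHull_add (A : Set (Fin n → ℤ)) :
    NewtonPoly b A = convexHull ℝ (toReal '' A) + coneS b := by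
  have hgen : {x | ∃ k ∈ A, ∃ v ∈ coneS b, x = toReal k + v} = toReal '' A + coneS b := by
    ext x
    simp [Set.mem_add, eq_comm]
  rw [NewtonPoly, hgen, convexHull_add, convex_coneS.convexHull_eq]

lemma add_mem_newtonPoly {A : Set (Fin n → ℤ)} {p v : Fin n → ℝ} (hp : p ∈ NewtonPoly b A)
    (hv : v ∈ coneS b) : p + v ∈ NewtonPoly b A := by
  rw [newtonPoly_eq_convexHull_add] at hp ⊢
  obtain ⟨q, hq, w, hw, rfl⟩ := hp
  exact add_assoc q w v ▸ Set.add_mem_add hq (add_mem_coneS hw hv)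

lemma toReal_mem_newtonPoly {A : Set (Fin n → ℤ)} {k : Fin n → ℤ} (hk : k ∈ A) :
    toReal k ∈ NewtonPoly b A :=
  subset_convexHull ℝ _ ⟨k, hk, 0, zero_mem_coneS, (add_zero _).symm⟩

lemma newtonPoly_subset_newtonPoly {A B : Set (Fin n → ℤ)}
    (hBA : ∀ k ∈ B, toReal k ∈ NewtonPoly b A) : NewtonPoly b B ⊆ NewtonPoly b A := by
  rw [newtonPoly_eq_convexHull_add B]
  rintro _ ⟨q, hq, v, hv, rfl⟩
  refine add_mem_newtonPoly (convexHull_min ?_ (convex_convexHull ℝ _) hq) hv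
  rintro _ ⟨k, hk, rfl⟩
  exact hBA k hk

lemma isClosed_newtonPoly {A : Set (Fin n → ℤ)} (hA : A ⊆ Sgroup b) :
    IsClosed (NewtonPoly b A) := by
  obtain ⟨F, hFA, hFfin, hAF⟩ := AddSubmonoid.exists_finite_subset_subset_add_closure_range b hA
  have hF : NewtonPoly b A = NewtonPoly b F := by
    refine (newtonPoly_subset_newtonPoly fun k hk => ?_).antisymm
      (newtonPoly_subset_newtonPoly fun k hk => toReal_mem_newtonPoly (hFA hk))
    obtain ⟨f, hf, s, hs, rfl⟩ := hAF hk
    rw [toReal_add]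
    exact add_mem_newtonPoly (toReal_mem_newtonPoly hf) (toReal_mem_coneS hs)
  rw [hF, newtonPoly_eq_convexHull_add]
  exact isClosed_coneS.add_left_of_isCompact ((hFfin.image _).isCompact_convexHull (𝕜 := ℝ))

lemma exists_separating_functional {A : Set (Fin n → ℤ)} (hA : A ⊆ Sgroup b)
    {x : Fin n → ℝ} (hx : x ∉ NewtonPoly b A) :
    ∃ f : (Fin n → ℝ) →L[ℝ] ℝ, ∃ u : ℝ, f x < u ∧ (∀ p ∈ NewtonPoly b A, u < f p) ∧
      ∀ v ∈ coneS b, 0 ≤ f v := by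
  rcases (NewtonPoly b A).eq_empty_or_nonempty with hP | ⟨p, hp⟩
  · exact ⟨0, 1, by simp, by simp [hP], by simp⟩
  obtain ⟨f, u, hfx, hfP⟩ :=
    geometric_hahn_banach_point_closed (convex_convexHull ℝ _) (isClosed_newtonPoly hA) hx
  refine ⟨f, u, hfx, hfP, fun v hv => ?_⟩
  by_contra! hneg
  -- otherwise `p + t • v` would lie in the polyhedron with `f (p + t • v) = u`
  let t := (f p - u) / -f v
  have ht : 0 ≤ t := div_nonneg (sub_nonneg.mpr (hfP p hp).le) (neg_nonneg.mpr hneg.le)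
  have hmem := hfP _ (add_mem_newtonPoly hp (smul_mem_coneS ht hv))
  have htv : t * f v = u - f p := by
    have : f v ≠ 0 := hneg.ne
    simp only [t]
    field_simp
    ring
  rw [map_add, map_smul, smul_eq_mul, htv] at hmem
  linarith

lemma exists_forall_le_of_subset_Sgroup {A : Set (Fin n → ℤ)} (hA : A ⊆ Sgroup b)
    (hAne : A.Nonempty) {f : (Fin n → ℝ) →ₗ[ℝ] ℝ} (hf : ∀ v ∈ coneS b, 0 ≤ f v) :
    ∃ a ∈ A, ∀ a' ∈ A, f (toReal a) ≤ f (toReal a') := by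
  obtain ⟨F, hFA, hFfin, hAF⟩ := AddSubmonoid.exists_finite_subset_subset_add_closure_range b hA
  have hFne : F.Nonempty := by
    obtain ⟨a, ha⟩ := hAne
    obtain ⟨f, hf, -⟩ := hAF ha
    exact ⟨f, hf⟩
  obtain ⟨a, ha, hmin⟩ := Set.exists_min_image F (fun a => f (toReal a)) hFfin hFne
  refine ⟨a, hFA ha, fun a' ha' => ?_⟩
  obtain ⟨g, hg, s, hs, rfl⟩ := hAF ha'
  rw [toReal_add, map_add]
  linarith [hmin g hg, hf _ (toReal_mem_coneS hs)]

def expWeight (f : (Fin n → ℝ) →ₗ[ℝ] ℝ) : (Fin n →₀ ℕ) →+ ℝ where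
  toFun d := f (toReal (expToZ d))
  map_zero' := by rw [expToZ_zero, toReal_zero, map_zero]
  map_add' d e := by rw [expToZ_add, toReal_add, map_add]

lemma isIntegralOverIdeal_of_mem {R : Type*} [CommRing R] {I : Ideal R} {g : R} (hg : g ∈ I) :
    IsIntegralOverIdeal I g :=
  ⟨1, one_pos, fun _ => -g, fun _ => by simpa using I.neg_mem hg, by simp⟩

lemma toReal_mem_newtonIdeal_of_isIntegralOverIdeal {I : Ideal (RS b)} {h : RS b}
    (hint : IsIntegralOverIdeal I h) {k : Fin n → ℤ}
    (hk : k ∈ suppZ (h : MvPowerSeries (Fin n) ℂ)) : toReal k ∈ NewtonIdeal b I := by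
  obtain ⟨m, -, a, ha, heq⟩ := hint
  obtain ⟨dk, hdk, rfl⟩ := hk
  have hAS : (⋃ g ∈ (I : Set (RS b)), suppZ (g : MvPowerSeries (Fin n) ℂ)) ⊆ Sgroup b :=
    Set.iUnion₂_subset fun g _ => suppZ_subset_Sgroup g
  by_contra hk
  obtain ⟨f, u, hfk, hfI, hfcone⟩ := exists_separating_functional hAS hk
  let w := expWeight f.toLinearMap
  have hI : ∀ g ∈ I, (RS b).val g ∈ weightsIn w (Ici u) := fun g hg d hd =>
    (hfI _ (toReal_mem_newtonPoly (Set.mem_biUnion hg ⟨d, hd, rfl⟩))).le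
  obtain ⟨_, ⟨d₀, hd₀, rfl⟩, hmin⟩ := exists_forall_le_of_subset_Sgroup (suppZ_subset_Sgroup h)
    ⟨_, dk, hdk, rfl⟩ hfcone
  have hh : (h : MvPowerSeries (Fin n) ℂ) ∈ weightsIn w (Ici (w d₀)) :=
    fun d hd => hmin _ ⟨d, hd, rfl⟩
  have hτu : w d₀ < u := (hmin _ ⟨dk, hdk, rfl⟩).trans_lt hfk
  obtain ⟨ds, hds, hwds⟩ := exists_coeff_pow_ne_zero_weight_le hh hd₀ rfl m
  have hterms : ∑ i : Fin m, (a i : MvPowerSeries (Fin n) ℂ) * (h : MvPowerSeries (Fin n) ℂ) ^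
      (m - 1 - (i : ℕ)) ∈ weightsIn w (Ioi (m * w d₀)) := by
    refine sum_mem fun i _ => weightsIn_mono ?_ (mul_mem_weightsIn
      (map_mem_weightsIn_of_mem_pow (RS b).val hI i (ha i)) (pow_mem_weightsIn_Ici hh _))
    refine (Set.Ici_add_Ici_subset _ _).trans (Set.Ici_subset_Ioi.mpr ?_)
    have hi : ((m - 1 - (i : ℕ) : ℕ) : ℝ) = m - (i + 1) := by
      rw [Nat.sub_sub, Nat.cast_sub (by omega)]
      push_cast
      ring
    rw [hi]
    nlinarith
  have hpow : (h : MvPowerSeries (Fin n) ℂ) ^ m = -∑ i : Fin m, (a i : MvPowerSeries (Fin n) ℂ) *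
      (h : MvPowerSeries (Fin n) ℂ) ^ (m - 1 - (i : ℕ)) :=
    eq_neg_of_add_eq_zero_left (by exact_mod_cast congrArg Subtype.val heq)
  exact hds (coeff_eq_zero_of_mem_weightsIn (hpow ▸ neg_mem hterms) (not_lt.mpr hwds))

end Toric

theorem newton_eq_newton_closure_general
    (n r : ℕ) (b : Fin r → Fin n → ℤ)
    (I : Ideal ↥(RS b)) :
    NewtonIdeal b I =
      NewtonPoly b (⋃ h ∈ { h : ↥(RS b) | IsIntegralOverIdeal I h },
        suppZ (h : MvPowerSeries (Fin n) ℂ)) := by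
  refine (newtonPoly_subset_newtonPoly fun k hk => ?_).antisymm
    (newtonPoly_subset_newtonPoly fun k hk => ?_)
  · obtain ⟨g, hg, hkg⟩ := Set.mem_iUnion₂.mp hk
    exact toReal_mem_newtonPoly (Set.mem_biUnion (isIntegralOverIdeal_of_mem hg) hkg)
  · obtain ⟨h, hh, hkh⟩ := Set.mem_iUnion₂.mp hk
    exact toReal_mem_newtonIdeal_of_isIntegralOverIdeal hh hkh

/-- `Γ₊(I) = Γ₊(Ī)` for every ideal `I` of `R_S`. -/
theorem newton_eq_newton_closure
    (n r : ℕ) (hn : 1 ≤ n) (hr : 1 ≤ r) (b : Fin r → Fin n → ℤ)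
    (hb_ne : ∀ i, b i ≠ 0) (hb_nonneg : ∀ i j, 0 ≤ b i j)
    (hb_gen : AddSubgroup.closure (Set.range b) = (⊤ : AddSubgroup (Fin n → ℤ)))
    (hdim : Submodule.span ℝ (coneS b) = (⊤ : Submodule ℝ (Fin n → ℝ)))
    (hstrict : ∀ x ∈ coneS b, -x ∈ coneS b → x = (0 : Fin n → ℝ))
    (I : Ideal ↥(RS b)) :
    NewtonIdeal b I =
      NewtonPoly b (⋃ h ∈ { h : ↥(RS b) | IsIntegralOverIdeal I h },
        suppZ (h : MvPowerSeries (Fin n) ℂ)) :=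
  newton_eq_newton_closure_general n r b I

end ToricNewton
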